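/- arXiv:2402.02773 — 3 statements merged into one kernel-verified Lean document; each statement's English description precedes it below -/
import Mathlib

section
/- Let J ≥ 1 and let A, B, C be J×J real matrices with A = B + C. Assume A and B are invertible, C is symmetric positive definite, and λ_min(C⁻¹) > λ_max(C⁻¹)·(‖A − I_J‖·(1 + ‖B − I_J‖) + ‖B − I_J‖). Then ‖A⁻¹ − B⁻¹‖ ≤ 1 / (λ_min(C⁻¹) − λ_max(C⁻¹)·(‖A − I_J‖·(1 + ‖B − I_J‖) + ‖B − I_J‖)). -/
open Matrix

/-- The spectral norm of a real matrix: the operator norm induced by the Euclidean vector norm. -/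
noncomputable def specNorm {m n : ℕ} (M : Matrix (Fin m) (Fin n) ℝ) : ℝ :=
  ‖LinearMap.toContinuousLinearMap (Matrix.toEuclideanLin M)‖

/-- Smallest eigenvalue of a (symmetric) real matrix. -/
noncomputable def eigMin {J : ℕ} (M : Matrix (Fin J) (Fin J) ℝ) : ℝ :=
  sInf (spectrum ℝ M)

/-- Largest eigenvalue of a (symmetric) real matrix. -/
noncomputable def eigMax {J : ℕ} (M : Matrix (Fin J) (Fin J) ℝ) : ℝ :=
  sSup (spectrum ℝ M)

/-!
The identity `A⁻¹ - B⁻¹ = A⁻¹ (B - A) B⁻¹ = -(B C⁻¹ A)⁻¹` reduces the claim to bounding the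
inverse of `P = B C⁻¹ A`, a perturbation of `C⁻¹`: expanding `B = I + (B - I)` and
`A = I + (A - I)` gives `‖P - C⁻¹‖ ≤ λ_max(C⁻¹) (‖A - I‖ (1 + ‖B - I‖) + ‖B - I‖) =: ε`.
Since `‖C‖ ≤ 1 / λ_min(C⁻¹)`, we have `‖C⁻¹ N‖ ≥ λ_min(C⁻¹) ‖N‖` for every `N`, hence
`‖P N‖ ≥ (λ_min(C⁻¹) - ε) ‖N‖`, and `N = P⁻¹` gives the bound.
The spectral estimates for a Hermitian `M` come from its diagonalisation `M = U diag(λ) U*`,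
conjugation by a unitary being an isometry of the operator norm.
-/

open scoped Matrix.Norms.L2Operator ComplexOrder

section NormedRing

variable {R : Type*} [NormedRing R]

lemma norm_mul_mul_sub_le (b c a : R) :
    ‖b * c * a - c‖ ≤ ‖c‖ * (‖a - 1‖ * (1 + ‖b - 1‖) + ‖b - 1‖) := by
  have hsplit : b * c * a - c = c * (a - 1) + (b - 1) * c + (b - 1) * c * (a - 1) := by
    noncomm_ring
  rw [hsplit]
  calc _ ≤ ‖c * (a - 1)‖ + ‖(b - 1) * c‖ + ‖(b - 1) * c * (a - 1)‖ := norm_add₃_le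
    _ ≤ ‖c‖ * ‖a - 1‖ + ‖b - 1‖ * ‖c‖ + ‖b - 1‖ * ‖c‖ * ‖a - 1‖ := by
        gcongr
        exacts [norm_mul_le _ _, norm_mul_le _ _, norm_mul₃_le]
    _ = _ := by ring

lemma sub_mul_norm_le_norm_add_mul {M E N : R} {m ε : ℝ} (hM : m * ‖N‖ ≤ ‖M * N‖)
    (hE : ‖E‖ ≤ ε) : (m - ε) * ‖N‖ ≤ ‖(M + E) * N‖ := by
  have hEN : ‖E * N‖ ≤ ε * ‖N‖ := (norm_mul_le _ _).trans (by gcongr)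
  have := norm_sub_norm_le (M * N) (-(E * N))
  rw [sub_neg_eq_add, ← add_mul, norm_neg] at this
  linarith

end NormedRing

namespace Matrix

variable {n 𝕜 : Type*} [Fintype n] [DecidableEq n] [RCLike 𝕜]

lemma l2_opNorm_conjStarAlgAut (U : unitary (Matrix n n 𝕜)) (D : Matrix n n 𝕜) :
    ‖Unitary.conjStarAlgAut 𝕜 _ U D‖ = ‖D‖ := by
  rw [Unitary.conjStarAlgAut_apply, ← Unitary.coe_star, CStarRing.norm_mul_coe_unitary,
    CStarRing.norm_coe_unitary_mul]

lemma l2_opNorm_one_le : ‖(1 : Matrix n n 𝕜)‖ ≤ 1 := by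
  rw [← diagonal_one, l2_opNorm_diagonal]
  exact pi_norm_le_iff_of_nonneg zero_le_one |>.2 fun _ => by simp

lemma IsHermitian.l2_opNorm_le_of_forall_abs_le {M : Matrix n n 𝕜} (hM : M.IsHermitian)
    {c : ℝ} (hc : 0 ≤ c) (h : ∀ x ∈ spectrum ℝ M, |x| ≤ c) : ‖M‖ ≤ c := by
  rw [hM.spectral_theorem, l2_opNorm_conjStarAlgAut, l2_opNorm_diagonal,
    pi_norm_le_iff_of_nonneg hc]
  intro i
  simpa using h _ (hM.eigenvalues_mem_spectrum_real i)

lemma IsHermitian.inv_eq_conjStarAlgAut {M : Matrix n n 𝕜} (hM : M.IsHermitian)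
    (h : ∀ i, hM.eigenvalues i ≠ 0) :
    M⁻¹ = Unitary.conjStarAlgAut 𝕜 _ hM.eigenvectorUnitary
      (diagonal fun i => ((hM.eigenvalues i : 𝕜))⁻¹) := by
  conv_lhs => rw [hM.spectral_theorem]
  refine inv_eq_right_inv ?_
  rw [← map_mul, diagonal_mul_diagonal]
  simp [h]

lemma IsHermitian.l2_opNorm_inv_le_of_forall_le {M : Matrix n n 𝕜} (hM : M.IsHermitian)
    {m : ℝ} (hm : 0 < m) (h : ∀ x ∈ spectrum ℝ M, m ≤ x) : ‖M⁻¹‖ ≤ m⁻¹ := by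
  have hle : ∀ i, m ≤ hM.eigenvalues i := fun i => h _ (hM.eigenvalues_mem_spectrum_real i)
  rw [hM.inv_eq_conjStarAlgAut fun i => (hm.trans_le (hle i)).ne', l2_opNorm_conjStarAlgAut,
    l2_opNorm_diagonal, pi_norm_le_iff_of_nonneg (inv_nonneg.2 hm.le)]
  intro i
  rw [norm_inv, RCLike.norm_ofReal, abs_of_pos (hm.trans_le (hle i))]
  exact inv_anti₀ hm (hle i)

lemma IsHermitian.mul_l2_opNorm_le_l2_opNorm_mul {M : Matrix n n 𝕜} (hM : M.IsHermitian)
    {m : ℝ} (hm : 0 < m) (h : ∀ x ∈ spectrum ℝ M, m ≤ x) (N : Matrix n n 𝕜) :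
    m * ‖N‖ ≤ ‖M * N‖ := by
  have hunit : IsUnit M := spectrum.isUnit_of_zero_notMem ℝ fun h0 => (h 0 h0).not_gt hm
  have hinv := hM.l2_opNorm_inv_le_of_forall_le hm h
  calc m * ‖N‖ = m * ‖M⁻¹ * (M * N)‖ := by
        rw [← Matrix.mul_assoc, nonsing_inv_mul _ ((isUnit_iff_isUnit_det M).1 hunit),
          Matrix.one_mul]
    _ ≤ m * (m⁻¹ * ‖M * N‖) := by gcongr; exact (norm_mul_le _ _).trans (by gcongr)
    _ = ‖M * N‖ := by field_simp

lemma PosSemidef.l2_opNorm_le_sSup_spectrum {M : Matrix n n 𝕜} (hM : M.PosSemidef) :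
    ‖M‖ ≤ sSup (spectrum ℝ M) := by
  have hnonneg : ∀ x ∈ spectrum ℝ M, 0 ≤ x := by
    rw [hM.isHermitian.spectrum_real_eq_range_eigenvalues]
    rintro _ ⟨i, rfl⟩
    exact hM.eigenvalues_nonneg i
  refine hM.isHermitian.l2_opNorm_le_of_forall_abs_le (Real.sSup_nonneg hnonneg) fun x hx => ?_
  rw [abs_of_nonneg (hnonneg x hx)]
  exact le_csSup M.finite_real_spectrum.bddAbove hx

lemma inv_sub_inv_of_eq_add {α : Type*} [CommRing α] {A B C : Matrix n n α} (hABC : A = B + C)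
    (hA : IsUnit A.det) (hB : IsUnit B.det) (hC : IsUnit C.det) :
    A⁻¹ - B⁻¹ = -(B * C⁻¹ * A)⁻¹ := by
  have hunits : IsUnit A ↔ IsUnit B :=
    iff_of_true ((isUnit_iff_isUnit_det A).2 hA) ((isUnit_iff_isUnit_det B).2 hB)
  rw [inv_sub_inv hunits, mul_inv_rev, mul_inv_rev, nonsing_inv_nonsing_inv C hC, hABC,
    sub_add_cancel_left, Matrix.mul_neg, Matrix.neg_mul, Matrix.mul_assoc]

end Matrix

lemma specNorm_eq_l2_opNorm {m n : ℕ} (M : Matrix (Fin m) (Fin n) ℝ) : specNorm M = ‖M‖ := rfl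

lemma eigMin_le {J : ℕ} {M : Matrix (Fin J) (Fin J) ℝ} {x : ℝ} (hx : x ∈ spectrum ℝ M) :
    eigMin M ≤ x :=
  csInf_le M.finite_real_spectrum.bddBelow hx

theorem stmt0_general {J : ℕ} (A B C : Matrix (Fin J) (Fin J) ℝ)
    (hABC : A = B + C) (hA : IsUnit A.det) (hB : IsUnit B.det) (hC : C.PosDef)
    (hgap : eigMax C⁻¹ * (specNorm (A - 1) * (1 + specNorm (B - 1)) + specNorm (B - 1))
      < eigMin C⁻¹) :
    specNorm (A⁻¹ - B⁻¹) ≤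
      1 / (eigMin C⁻¹ -
        eigMax C⁻¹ * (specNorm (A - 1) * (1 + specNorm (B - 1)) + specNorm (B - 1))) := by
  simp only [specNorm_eq_l2_opNorm] at hgap ⊢
  have hCi : C⁻¹.PosDef := hC.inv
  have hCdet : IsUnit C.det := isUnit_iff_ne_zero.2 hC.det_pos.ne'
  set P := B * C⁻¹ * A
  have hPdet : IsUnit P.det := by
    simp only [P, det_mul]
    exact (hB.mul (isUnit_nonsing_inv_det C hCdet)).mul hA
  have hnormC : ‖C⁻¹‖ ≤ eigMax C⁻¹ := hCi.posSemidef.l2_opNorm_le_sSup_spectrum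
  have hXnonneg : 0 ≤ eigMax C⁻¹ := (norm_nonneg _).trans hnormC
  have hm : 0 < eigMin C⁻¹ := (mul_nonneg hXnonneg (by positivity)).trans_lt hgap
  have hlower : ∀ N, eigMin C⁻¹ * ‖N‖ ≤ ‖C⁻¹ * N‖ :=
    hCi.isHermitian.mul_l2_opNorm_le_l2_opNorm_mul hm fun _ => eigMin_le
  have hpert : ‖P - C⁻¹‖ ≤ eigMax C⁻¹ * (‖A - 1‖ * (1 + ‖B - 1‖) + ‖B - 1‖) :=
    (norm_mul_mul_sub_le B C⁻¹ A).trans (by gcongr)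
  have hP := sub_mul_norm_le_norm_add_mul (hlower P⁻¹) hpert
  rw [add_sub_cancel, mul_nonsing_inv P hPdet] at hP
  rw [inv_sub_inv_of_eq_add hABC hA hB hCdet, norm_neg, le_div_iff₀' (sub_pos.2 hgap)]
  exact hP.trans l2_opNorm_one_le

/-- If `A = B + C` with `A`, `B` invertible and `C` symmetric positive definite, and
`λ_min(C⁻¹) > λ_max(C⁻¹)·(‖A − I‖(1 + ‖B − I‖) + ‖B − I‖)`, then
`‖A⁻¹ − B⁻¹‖ ≤ 1/(λ_min(C⁻¹) − λ_max(C⁻¹)(‖A − I‖(1 + ‖B − I‖) + ‖B − I‖))`. -/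
theorem stmt0 {J : ℕ} (hJ : 1 ≤ J) (A B C : Matrix (Fin J) (Fin J) ℝ)
    (hABC : A = B + C) (hA : IsUnit A.det) (hB : IsUnit B.det) (hC : C.PosDef)
    (hgap : eigMax C⁻¹ * (specNorm (A - 1) * (1 + specNorm (B - 1)) + specNorm (B - 1))
      < eigMin C⁻¹) :
    specNorm (A⁻¹ - B⁻¹) ≤
      1 / (eigMin C⁻¹ -
        eigMax C⁻¹ * (specNorm (A - 1) * (1 + specNorm (B - 1)) + specNorm (B - 1))) :=
  stmt0_general A B C hABC hA hB hC hgap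
end

section
/- Let d ≥ 1 and for each j = 1,…,d let A₁ⱼ > 0 and A₂ⱼ > 0, and set A₃ⱼ = A₁ⱼ + A₂ⱼ. For ℓ = (ℓ₁,…,ℓ_d) ∈ ℤ^d define the block Γ(ℓ) = ∏_{j=1}^d ( (ℓⱼ − 1/2) A₃ⱼ , (ℓⱼ − 1/2) A₃ⱼ + A₁ⱼ ] ⊂ ℝ^d. Then for any ℓ₁ ≠ ℓ₂ in ℤ^d, the ℓ¹ distance between the two blocks satisfies inf{ Σ_{j=1}^d |xⱼ − yⱼ| : x ∈ Γ(ℓ₁), y ∈ Γ(ℓ₂) } ≥ max( |ℓ₁ − ℓ₂|₁ − d , 0 ) · min_{1≤j≤d} A₃ⱼ + min_{1≤j≤d} A₂ⱼ, where |ℓ₁ − ℓ₂|₁ = Σ_{j=1}^d |ℓ₁ⱼ − ℓ₂ⱼ|. -/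
open Set

/-- Separation of distinct large blocks: with `A₃ⱼ = A₁ⱼ + A₂ⱼ` and blocks
`Γ(ℓ) = ∏ⱼ ((ℓⱼ−1/2)A₃ⱼ, (ℓⱼ−1/2)A₃ⱼ + A₁ⱼ]`, for `ℓ₁ ≠ ℓ₂` the ℓ¹ distance between `Γ(ℓ₁)`
and `Γ(ℓ₂)` is at least `max(|ℓ₁−ℓ₂|₁ − d, 0)·minⱼA₃ⱼ + minⱼA₂ⱼ`. -/
theorem stmt11 (d : ℕ) (hd : 1 ≤ d) (A₁ A₂ : Fin d → ℝ)
    (h₁ : ∀ j, 0 < A₁ j) (h₂ : ∀ j, 0 < A₂ j)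
    (A₃ : Fin d → ℝ) (hA₃ : A₃ = fun j => A₁ j + A₂ j)
    (Γ : (Fin d → ℤ) → Set (Fin d → ℝ))
    (hΓ : Γ = fun ℓ => {x | ∀ j, x j ∈
      Set.Ioc (((ℓ j : ℝ) - 1 / 2) * A₃ j) (((ℓ j : ℝ) - 1 / 2) * A₃ j + A₁ j)})
    (ℓ₁ ℓ₂ : Fin d → ℤ) (hne : ℓ₁ ≠ ℓ₂) :
    max (((∑ j, |ℓ₁ j - ℓ₂ j| : ℤ) : ℝ) - (d : ℝ)) 0 * (⨅ j, A₃ j) + (⨅ j, A₂ j) ≤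
      sInf {r : ℝ | ∃ x ∈ Γ ℓ₁, ∃ y ∈ Γ ℓ₂, r = ∑ j, |x j - y j|} := by
  subst hA₃ hΓ
  haveI : Nonempty (Fin d) := ⟨⟨0, hd⟩⟩
  set m₃ := ⨅ j, (A₁ j + A₂ j) with hm₃def
  set m₂ := ⨅ j, A₂ j with hm₂def
  have hm₃le : ∀ j, m₃ ≤ A₁ j + A₂ j := fun j => ciInf_le (Finite.bddBelow_range _) j
  have hm₂le : ∀ j, m₂ ≤ A₂ j := fun j => ciInf_le (Finite.bddBelow_range _) j
  have hm₃0 : 0 ≤ m₃ := le_ciInf fun j => (add_pos (h₁ j) (h₂ j)).le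
  have hm₂0 : 0 ≤ m₂ := le_ciInf fun j => (h₂ j).le
  set kR : Fin d → ℝ := fun j => ((|ℓ₁ j - ℓ₂ j| : ℤ) : ℝ) with hkRdef
  apply le_csInf
  · refine ⟨∑ j, |(((ℓ₁ j : ℝ) - 1/2) * (A₁ j + A₂ j) + A₁ j) -
        (((ℓ₂ j : ℝ) - 1/2) * (A₁ j + A₂ j) + A₁ j)|,
      fun j => (((ℓ₁ j : ℝ) - 1/2) * (A₁ j + A₂ j) + A₁ j),
      fun j => ?_, fun j => (((ℓ₂ j : ℝ) - 1/2) * (A₁ j + A₂ j) + A₁ j),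
      fun j => ?_, rfl⟩ <;>
    exact ⟨by linarith [h₁ j], le_refl _⟩
  · rintro r ⟨x, hx, y, hy, rfl⟩
    set g : Fin d → ℝ := fun j =>
      if ℓ₁ j = ℓ₂ j then 0 else (kR j - 1) * (A₁ j + A₂ j) + A₂ j with hgdef
    have key : ∀ j : Fin d, ℓ₁ j ≠ ℓ₂ j →
        (kR j - 1) * (A₁ j + A₂ j) + A₂ j ≤ |x j - y j| := by
      intro j hj
      obtain ⟨h1a, h1b⟩ := hx j
      obtain ⟨h2a, h2b⟩ := hy j
      have hk1 : (1 : ℤ) ≤ |ℓ₁ j - ℓ₂ j| := Int.one_le_abs (sub_ne_zero.mpr hj)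
      have hk1R : (1 : ℝ) ≤ kR j := by
        simp only [hkRdef]; exact_mod_cast hk1
      have hcast : kR j = |(ℓ₁ j : ℝ) - (ℓ₂ j : ℝ)| := by
        simp only [hkRdef]; push_cast; ring_nf
      set c₁ := ((ℓ₁ j : ℝ) - 1/2) * (A₁ j + A₂ j) with hc₁
      set c₂ := ((ℓ₂ j : ℝ) - 1/2) * (A₁ j + A₂ j) with hc₂
      have hcc : |c₁ - c₂| = |(ℓ₁ j : ℝ) - ℓ₂ j| * (A₁ j + A₂ j) := by
        rw [show c₁ - c₂ = ((ℓ₁ j : ℝ) - ℓ₂ j) * (A₁ j + A₂ j) by rw [hc₁, hc₂]; ring,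
          abs_mul, abs_of_pos (add_pos (h₁ j) (h₂ j))]
      have h3 : |c₁ - c₂| - |x j - y j| ≤ |(c₁ - c₂) - (x j - y j)| :=
        abs_sub_abs_le_abs_sub _ _
      have h4 : |(c₁ - c₂) - (x j - y j)| ≤ A₁ j :=
        abs_le.mpr ⟨by linarith, by linarith⟩
      have heq : (kR j - 1) * (A₁ j + A₂ j) + A₂ j = kR j * (A₁ j + A₂ j) - A₁ j := by
        ring
      rw [heq, hcast]
      linarith [hcc ▸ h3]
    have stepA : ∑ j, g j ≤ ∑ j, |x j - y j| := by
      apply Finset.sum_le_sum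
      intro j _
      by_cases h : ℓ₁ j = ℓ₂ j
      · simp [hgdef, h, abs_nonneg]
      · simpa [hgdef, h] using key j h
    set S := Finset.univ.filter (fun j => ¬ (ℓ₁ j = ℓ₂ j)) with hSdef
    have hS : ∑ j, g j = ∑ j ∈ S, ((kR j - 1) * (A₁ j + A₂ j) + A₂ j) := by
      rw [hSdef, Finset.sum_filter]
      apply Finset.sum_congr rfl
      intro j _
      by_cases h : ℓ₁ j = ℓ₂ j <;> simp [hgdef, h]
    have hkS : ∀ j ∈ S, (1 : ℝ) ≤ kR j := by
      intro j hj
      rw [hSdef, Finset.mem_filter] at hj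
      simp only [hkRdef]
      exact_mod_cast Int.one_le_abs (sub_ne_zero.mpr hj.2)
    have stepB : ∑ j ∈ S, ((kR j - 1) * m₃ + m₂) ≤
        ∑ j ∈ S, ((kR j - 1) * (A₁ j + A₂ j) + A₂ j) := by
      apply Finset.sum_le_sum
      intro j hj
      have h1 := hkS j hj
      have := hm₃le j
      have := hm₂le j
      nlinarith
    have hsum1 : ∑ j ∈ S, ((kR j - 1) * m₃ + m₂) =
        (∑ j ∈ S, kR j - S.card) * m₃ + S.card * m₂ := by
      rw [Finset.sum_add_distrib, Finset.sum_const, ← Finset.sum_mul]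
      rw [Finset.sum_sub_distrib, Finset.sum_const]
      simp [nsmul_eq_mul]
    have hKS : ∑ j ∈ S, kR j = ∑ j, kR j := by
      apply Finset.sum_subset (Finset.subset_univ S)
      intro j _ hj
      rw [hSdef, Finset.mem_filter] at hj
      have : ℓ₁ j = ℓ₂ j := by tauto
      simp [hkRdef, this]
    have hKcast : ((∑ j, |ℓ₁ j - ℓ₂ j| : ℤ) : ℝ) = ∑ j, kR j := by
      push_cast [hkRdef]; rfl
    have hScard1 : (1 : ℝ) ≤ S.card := by
      obtain ⟨j, hj⟩ := Function.ne_iff.mp hne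
      have : j ∈ S := by rw [hSdef, Finset.mem_filter]; exact ⟨Finset.mem_univ j, hj⟩
      exact_mod_cast Finset.card_pos.mpr ⟨j, this⟩
    have hScardd : (S.card : ℝ) ≤ d := by
      exact_mod_cast (Finset.card_le_card (Finset.subset_univ S)).trans_eq
        (Finset.card_univ.trans (Fintype.card_fin d))
    have hKgeS : (S.card : ℝ) ≤ ∑ j ∈ S, kR j := by
      calc (S.card : ℝ) = ∑ j ∈ S, (1 : ℝ) := by simp
        _ ≤ ∑ j ∈ S, kR j := Finset.sum_le_sum hkS
    have hmaxle : max (((∑ j, |ℓ₁ j - ℓ₂ j| : ℤ) : ℝ) - (d : ℝ)) 0 ≤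
        ∑ j ∈ S, kR j - S.card := by
      rw [hKcast, ← hKS]
      exact max_le (by linarith) (by linarith)
    have hfin : max (((∑ j, |ℓ₁ j - ℓ₂ j| : ℤ) : ℝ) - (d : ℝ)) 0 * m₃ + m₂ ≤
        (∑ j ∈ S, kR j - S.card) * m₃ + S.card * m₂ := by
      have h5 := mul_le_mul_of_nonneg_right hmaxle hm₃0
      nlinarith
    linarith [hS ▸ (hsum1 ▸ stepB), stepA, hfin]
end

section
/- Let d ≥ 1. For three pairwise distinct points i, j, k ∈ ℤ^d define d₁(i,j,k) as the maximum, over the three points, of the ℓ¹ distance from that point to the two-element set of the remaining two points (where the ℓ¹ distance from a point p to a finite set T is min{ |p − q|₁ : q ∈ T }). Then there exists a constant C depending only on d such that for every finite set I ⊂ ℤ^d and every integer k₀ ≥ 1, the number of triples (i,j,k) ∈ I³ with i, j, k pairwise distinct and d₁(i,j,k) = k₀ is at most C · k₀^{2d−1} · #I. -/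
/-!
If `maxGap i j k = r`, some two of the three points are at ℓ¹ distance exactly `r`, and the
third point lies within `r` of one of them, hence within `2r` of the first by the triangle
inequality. So each such triple is determined by an anchor in `I`, a point of the ℓ¹ sphere of
radius `r` (at most `2 (2r+1)^(d-1)` choices: all coordinates but the first are free in
`[-r, r]`, and the first is fixed up to sign) and a point of the box `[-2r, 2r]^d`
(`(4r+1)^d` choices), in one of three arrangements.
-/

/-- The ℓ¹ distance between two points of `ℤ^d`. -/
def l1dist {d : ℕ} (p q : Fin d → ℤ) : ℤ := ∑ j, |p j - q j|

/-- For pairwise distinct `i, j, k ∈ ℤ^d`, the maximum over the three points of the ℓ¹ distance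
from that point to the set of the remaining two points. -/
def maxGap {d : ℕ} (i j k : Fin d → ℤ) : ℤ :=
  max (max (min (l1dist i j) (l1dist i k)) (min (l1dist j i) (l1dist j k)))
    (min (l1dist k i) (l1dist k j))

open Finset

lemma l1dist_comm {d : ℕ} (p q : Fin d → ℤ) : l1dist p q = l1dist q p :=
  sum_congr rfl fun _ _ => abs_sub_comm _ _

lemma l1dist_triangle {d : ℕ} (p q r : Fin d → ℤ) :
    l1dist p r ≤ l1dist p q + l1dist q r := by
  rw [l1dist, l1dist, l1dist, ← sum_add_distrib]
  exact sum_le_sum fun j _ => abs_sub_le _ _ _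

lemma sum_abs_sub_apply_eq_l1dist {d : ℕ} (p q : Fin d → ℤ) :
    ∑ j, |(q - p) j| = l1dist p q :=
  sum_congr rfl fun _ _ => abs_sub_comm _ _

lemma exists_l1dist_eq_of_maxGap_eq {d : ℕ} {i j k : Fin d → ℤ} {r : ℤ}
    (h : maxGap i j k = r) :
    (l1dist i j = r ∧ l1dist i k ≤ 2 * r) ∨ (l1dist i k = r ∧ l1dist i j ≤ 2 * r) ∨
      (l1dist j k = r ∧ l1dist j i ≤ 2 * r) := by
  have hik := l1dist_triangle i j k
  have hjk := l1dist_triangle j i k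
  have hij := l1dist_triangle i k j
  rw [maxGap, l1dist_comm j i, l1dist_comm k i, l1dist_comm k j] at h
  rw [l1dist_comm j i] at hjk ⊢
  rw [l1dist_comm k j] at hij
  omega

noncomputable def latticeBox (d R : ℕ) : Finset (Fin d → ℤ) :=
  Fintype.piFinset fun _ => Icc (-(R : ℤ)) R

lemma card_latticeBox (d R : ℕ) : (latticeBox d R).card = (2 * R + 1) ^ d := by
  simp only [latticeBox, Fintype.card_piFinset, Int.card_Icc, prod_const, card_univ,
    Fintype.card_fin]
  congr 1
  omega

lemma mem_latticeBox_of_sum_abs_le {d R : ℕ} {z : Fin d → ℤ} (h : ∑ j, |z j| ≤ R) :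
    z ∈ latticeBox d R := by
  refine Fintype.mem_piFinset.mpr fun j => mem_Icc.mpr (abs_le.mp ?_)
  exact (single_le_sum (fun i _ => abs_nonneg (z i)) (mem_univ j)).trans h

lemma sub_mem_latticeBox_of_l1dist_le {d R : ℕ} {p q : Fin d → ℤ} (h : l1dist p q ≤ R) :
    q - p ∈ latticeBox d R :=
  mem_latticeBox_of_sum_abs_le ((sum_abs_sub_apply_eq_l1dist p q).trans_le h)

noncomputable def l1Sphere (d R : ℕ) : Finset (Fin d → ℤ) :=
  (latticeBox d R).filter fun z => ∑ j, |z j| = R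

lemma sub_mem_l1Sphere_of_l1dist_eq {d R : ℕ} {p q : Fin d → ℤ} (h : l1dist p q = R) :
    q - p ∈ l1Sphere d R := by
  rw [← sum_abs_sub_apply_eq_l1dist] at h
  exact mem_filter.mpr ⟨mem_latticeBox_of_sum_abs_le h.le, h⟩

lemma l1Sphere_succ_subset_image (m R : ℕ) :
    l1Sphere (m + 1) R ⊆ (latticeBox m R ×ˢ ({1, -1} : Finset ℤ)).image
      fun x => Fin.cons (x.2 * (R - ∑ j, |x.1 j|)) x.1 := by
  intro z hz
  obtain ⟨hbox, hsum⟩ := mem_filter.mp hz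
  rw [Fin.sum_univ_succ] at hsum
  refine mem_image.mpr ⟨(Fin.tail z, if 0 ≤ z 0 then 1 else -1), ?_, ?_⟩
  · refine mem_product.mpr ⟨Fintype.mem_piFinset.mpr fun j => ?_, by split_ifs <;> simp⟩
    exact Fintype.mem_piFinset.mp hbox j.succ
  · have hfirst : R - ∑ j, |Fin.tail z j| = |z 0| := by simp only [Fin.tail]; omega
    conv_rhs => rw [← Fin.cons_self_tail z]
    rw [hfirst]
    congr 1
    split_ifs with h0
    · rw [abs_of_nonneg h0, one_mul]
    · rw [abs_of_neg (not_le.mp h0)]; ring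

lemma card_l1Sphere_le (d R : ℕ) : (l1Sphere d R).card ≤ 2 * (2 * R + 1) ^ (d - 1) := by
  cases d with
  | zero =>
    calc (l1Sphere 0 R).card ≤ 1 := card_le_one.mpr fun a _ b _ => Subsingleton.elim a b
      _ ≤ 2 * (2 * R + 1) ^ (0 - 1) := by simp
  | succ m =>
    calc (l1Sphere (m + 1) R).card
        ≤ (latticeBox m R ×ˢ ({1, -1} : Finset ℤ)).card :=
          (card_le_card (l1Sphere_succ_subset_image m R)).trans card_image_le
      _ = 2 * (2 * R + 1) ^ (m + 1 - 1) := by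
          rw [card_product, card_latticeBox, Nat.add_sub_cancel, mul_comm]
          rfl

lemma ncard_le_of_maxGap_eq {d r : ℕ} (A : Finset (Fin d → ℤ))
    (T : Set ((Fin d → ℤ) × (Fin d → ℤ) × (Fin d → ℤ)))
    (hT : ∀ p ∈ T, p.1 ∈ A ∧ p.2.1 ∈ A ∧ maxGap p.1 p.2.1 p.2.2 = r) :
    T.ncard ≤ 3 * (A.card * (l1Sphere d r).card * (latticeBox d (2 * r)).card) := by
  set P := A ×ˢ l1Sphere d r ×ˢ latticeBox d (2 * r)
  set F := P.image (fun x => (x.1, x.1 + x.2.1, x.1 + x.2.2)) ∪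
    P.image (fun x => (x.1, x.1 + x.2.2, x.1 + x.2.1)) ∪
    P.image (fun x => (x.1 + x.2.2, x.1, x.1 + x.2.1))
  have hTF : T ⊆ F := by
    rintro ⟨i, j, k⟩ hp
    obtain ⟨hi, hj, hgap⟩ := hT _ hp
    have hball {p q : Fin d → ℤ} (h : l1dist p q ≤ 2 * r) : q - p ∈ latticeBox d (2 * r) :=
      sub_mem_latticeBox_of_l1dist_le (by exact_mod_cast h)
    simp only [F, P, coe_union, coe_image, Set.mem_union, Set.mem_image, mem_coe, mem_product]
    rcases exists_l1dist_eq_of_maxGap_eq hgap with ⟨hij, hik⟩ | ⟨hik, hij⟩ | ⟨hjk, hji⟩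
    · refine .inl (.inl ⟨(i, j - i, k - i), ?_, by simp⟩)
      exact ⟨hi, sub_mem_l1Sphere_of_l1dist_eq hij, hball hik⟩
    · refine .inl (.inr ⟨(i, k - i, j - i), ?_, by simp⟩)
      exact ⟨hi, sub_mem_l1Sphere_of_l1dist_eq hik, hball hij⟩
    · refine .inr ⟨(j, k - j, i - j), ?_, by simp⟩
      exact ⟨hj, sub_mem_l1Sphere_of_l1dist_eq hjk, hball hji⟩
  calc T.ncard ≤ F.card :=
        (Set.ncard_le_ncard hTF F.finite_toSet).trans_eq (Set.ncard_coe_finset F)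
    _ ≤ P.card + P.card + P.card :=
      (card_union_le _ _).trans <|
        add_le_add ((card_union_le _ _).trans (add_le_add card_image_le card_image_le))
          card_image_le
    _ = 3 * (A.card * (l1Sphere d r).card * (latticeBox d (2 * r)).card) := by
      rw [card_product, card_product]; ring

theorem stmt12_general (d : ℕ) :
    ∃ C : ℝ, 0 < C ∧ ∀ I : Set (Fin d → ℤ), I.Finite → ∀ k₀ : ℕ, 1 ≤ k₀ →
      ({p : (Fin d → ℤ) × (Fin d → ℤ) × (Fin d → ℤ) |
          p.1 ∈ I ∧ p.2.1 ∈ I ∧ p.2.2 ∈ I ∧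
          p.1 ≠ p.2.1 ∧ p.1 ≠ p.2.2 ∧ p.2.1 ≠ p.2.2 ∧
          maxGap p.1 p.2.1 p.2.2 = (k₀ : ℤ)}.ncard : ℝ) ≤
        C * (k₀ : ℝ) ^ (2 * d - 1) * (I.ncard : ℝ) := by
  refine ⟨6 * 3 ^ (d - 1) * 5 ^ d, by positivity, fun I hI k₀ hk₀ => ?_⟩
  obtain ⟨A, rfl⟩ := hI.exists_finset_coe
  have hk : (1 : ℝ) ≤ k₀ := by exact_mod_cast hk₀
  have hsphere : ((l1Sphere d k₀).card : ℝ) ≤ 2 * (2 * k₀ + 1) ^ (d - 1) := by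
    exact_mod_cast card_l1Sphere_le d k₀
  refine (Nat.cast_le.mpr (ncard_le_of_maxGap_eq (r := k₀) A _
    fun p hp => ⟨hp.1, hp.2.1, hp.2.2.2.2.2.2⟩)).trans ?_
  rw [card_latticeBox, Set.ncard_coe_finset, show 2 * d - 1 = d - 1 + d by omega, pow_add]
  push_cast
  calc _ ≤ 3 * (A.card * (2 * (2 * k₀ + 1) ^ (d - 1)) * (2 * (2 * k₀) + 1) ^ d : ℝ) := by
        gcongr
    _ ≤ 3 * (A.card * (2 * (3 * k₀) ^ (d - 1)) * (5 * k₀) ^ d : ℝ) := by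
        gcongr <;> linarith
    _ = _ := by ring

/-- Counting bound: there is `C` (depending only on `d`) such that for every finite `I ⊆ ℤ^d`
and every `k₀ ≥ 1`, the number of pairwise-distinct triples from `I` with maximal gap exactly
`k₀` is at most `C k₀^{2d−1} #I`. -/
theorem stmt12 (d : ℕ) (hd : 1 ≤ d) :
    ∃ C : ℝ, 0 < C ∧ ∀ I : Set (Fin d → ℤ), I.Finite → ∀ k₀ : ℕ, 1 ≤ k₀ →
      ({p : (Fin d → ℤ) × (Fin d → ℤ) × (Fin d → ℤ) |
          p.1 ∈ I ∧ p.2.1 ∈ I ∧ p.2.2 ∈ I ∧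
          p.1 ≠ p.2.1 ∧ p.1 ≠ p.2.2 ∧ p.2.1 ≠ p.2.2 ∧
          maxGap p.1 p.2.1 p.2.2 = (k₀ : ℤ)}.ncard : ℝ) ≤
        C * (k₀ : ℝ) ^ (2 * d - 1) * (I.ncard : ℝ) :=
  stmt12_general d
end
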